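/- Let S be a compact-bumpy semigroup of Y-valued functions on open bisections of a groupoid G with Hausdorff unit space, and D its diagonal. Then for a, b ∈ S: a ≺ b if and only if dom(a) is compactly contained in [Y^×]b, i.e. there exists a compact C ⊆ G with dom(a) ⊆ C ⊆ [Y^×]b. -/
import Mathlib


/-- A groupoid modelled as a set with a partially defined (Option-valued)
multiplication and an involution. -/
structure Gpd (G : Type*) where
  mul : G → G → Option G
  inv : G → G
  inv_inv : ∀ g, inv (inv g) = g
  inv_mul_isSome : ∀ g, (mul (inv g) g).isSome
  defined_iff : ∀ g h, (mul g h).isSome ↔ mul (inv g) g = mul h (inv h)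
  massoc : ∀ {g h k gh hk}, mul g h = some gh → mul h k = some hk →
      mul gh k = mul g hk
  inv_mul_cancel : ∀ {g h gh}, mul g h = some gh → mul (inv g) gh = some h
  mul_inv_cancel : ∀ {g h gh}, mul g h = some gh → mul gh (inv h) = some g
  mul_src : ∀ {g u}, mul (inv g) g = some u → mul g u = some g
  rng_mul : ∀ {g u}, mul g (inv g) = some u → mul u g = some g

namespace Gpd

variable {G Y : Type*} (𝒢 : Gpd G)

/-- The source `s(g) = g⁻¹g`. -/
def src (g : G) : G := (𝒢.mul (𝒢.inv g) g).getD g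

/-- The range `r(g) = gg⁻¹`. -/
def rng (g : G) : G := (𝒢.mul g (𝒢.inv g)).getD g

/-- The unit space `G⁰`. -/
def unitSpace : Set G := Set.range 𝒢.src

/-- The isotropy `G^iso`. -/
def iso : Set G := {g | 𝒢.src g = 𝒢.rng g}

/-- Bisections. -/
def IsBisection (B : Set G) : Prop :=
  ∀ g ∈ B, ∀ h ∈ B, (𝒢.src g = 𝒢.src h ∨ 𝒢.rng g = 𝒢.rng h) → g = h

/-- Isosections. -/
def IsIsosection (I : Set G) : Prop :=
  ∀ g ∈ I, ∀ h ∈ I, (𝒢.src g = 𝒢.src h ↔ 𝒢.rng g = 𝒢.rng h)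

/-- Product of subsets. -/
def setMul (A B : Set G) : Set G := {x | ∃ g ∈ A, ∃ h ∈ B, 𝒢.mul g h = some x}

/-- Inverse of a subset. -/
def setInv (A : Set G) : Set G := 𝒢.inv '' A

end Gpd

/-- The domain of a `Y`-valued partial function on `G`. -/
def pdom {G Y : Type*} (a : G → Option Y) : Set G := {g | (a g).isSome}

open Classical in
/-- The product of partial functions, `ab(gh) = a(g)b(h)` on factorizations
(well-defined when a domain is a bisection; defined by choice in general). -/
noncomputable def Gpd.convProd {G Y : Type*} [Mul Y] (𝒢 : Gpd G)
    (a b : G → Option Y) : G → Option Y := fun x =>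
  if h : ∃ p : Y × Y, ∃ g k : G, a g = some p.1 ∧ b k = some p.2 ∧ 𝒢.mul g k = some x
  then some (h.choose.1 * h.choose.2) else none

/-- The set `[Y^×]a` where the function takes invertible values. -/
def unitsPre {G Y : Type*} [Monoid Y] (a : G → Option Y) : Set G :=
  {g | ∃ y, a g = some y ∧ IsUnit y}

/-- The set `[1]a` where the function takes the value `1`. -/
def onePre {G Y : Type*} [Monoid Y] (a : G → Option Y) : Set G :=
  {g | a g = some (1 : Y)}

/-- A unital semigroup is `1`-cancellative if `xy = x ↔ y = 1 ↔ yx = x`. -/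
def OneCancellative (Y : Type*) [Monoid Y] : Prop :=
  ∀ x y : Y, (x * y = x ↔ y = 1) ∧ (y * x = x ↔ y = 1)

/-- The domination relation `a ≺_s b` relative to a diagonal `D`. -/
def precS {α : Type*} (m : α → α → α) (D : Set α) (a s b : α) : Prop :=
  m (m a s) b = a ∧ m (m b s) a = a ∧ m a s ∈ D ∧ m s a ∈ D

/-- Étale: inversion and multiplication continuous, source a local homeomorphism. -/
def Gpd.Etale {G : Type*} [TopologicalSpace G] (𝒢 : Gpd G) : Prop :=
  Continuous 𝒢.inv ∧
  Continuous (fun p : {p : G × G // (𝒢.mul p.1 p.2).isSome} =>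
    (𝒢.mul p.val.1 p.val.2).get p.property) ∧
  IsLocalHomeomorph 𝒢.src

/-- Ample: étale with a basis of compact open bisections. -/
def Gpd.Ample {G : Type*} [TopologicalSpace G] (𝒢 : Gpd G) : Prop :=
  𝒢.Etale ∧ TopologicalSpace.IsTopologicalBasis
    {O : Set G | IsCompact O ∧ IsOpen O ∧ 𝒢.IsBisection O}

/-- Bumpy semigroups of `Y`-valued functions on open bisections. -/
structure Gpd.IsBumpy {G Y : Type*} [TopologicalSpace G] [Monoid Y] (𝒢 : Gpd G)
    (S : Set (G → Option Y)) : Prop where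
  domBisection : ∀ a ∈ S, 𝒢.IsBisection (pdom a)
  domOpen : ∀ a ∈ S, IsOpen (pdom a)
  mulClosed : ∀ a ∈ S, ∀ b ∈ S, 𝒢.convProd a b ∈ S
  oneProper : ∀ a ∈ S, IsCompact (onePre a)
  empty_mem : (fun _ => (none : Option Y)) ∈ S
  urysohn : ∀ O : Set G, IsOpen O → ∀ g ∈ O, ∃ a ∈ S,
    pdom a ⊆ O ∧ g ∈ interior (unitsPre a)
  involutive : ∀ a ∈ S, ∀ g ∈ interior (unitsPre a), ∃ b ∈ S,
    𝒢.inv g ∈ interior {h | ∃ y z, a (𝒢.inv h) = some y ∧ b h = some z ∧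
      y * z = 1 ∧ z * y = 1}

/-- Compact-bumpy semigroups. -/
structure Gpd.IsCompactBumpy {G Y : Type*} [TopologicalSpace G] [Monoid Y] (𝒢 : Gpd G)
    (S : Set (G → Option Y)) : Prop where
  bumpy : 𝒢.IsBumpy S
  compactUrysohn : ∀ C O : Set G, IsCompact C → 𝒢.IsBisection C → IsOpen O →
    𝒢.IsBisection O → C ⊆ O → ∃ a ∈ S, pdom a ⊆ O ∧ C ⊆ unitsPre a
  compactInvolutive : ∀ a ∈ S, ∀ C ⊆ unitsPre a, IsCompact C → ∃ b ∈ S,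
    ∀ g ∈ C, ∃ y z, a g = some y ∧ b (𝒢.inv g) = some z ∧ y * z = 1 ∧ z * y = 1


set_option linter.unusedSectionVars false
set_option linter.unusedVariables false

section AuxGpd
namespace Gpd
variable {G : Type*} {𝒢 : Gpd G}

lemma mul_inv_self (g : G) : 𝒢.mul (𝒢.inv g) g = some (𝒢.src g) := by
  obtain ⟨u, hu⟩ := Option.isSome_iff_exists.mp (𝒢.inv_mul_isSome g)
  simp [src, hu]

lemma mul_self_inv (g : G) : 𝒢.mul g (𝒢.inv g) = some (𝒢.rng g) := by
  have h := mul_inv_self (𝒢 := 𝒢) (𝒢.inv g)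
  rw [𝒢.inv_inv] at h
  simp [rng, h]

lemma src_inv (g : G) : 𝒢.src (𝒢.inv g) = 𝒢.rng g := by
  have h := mul_inv_self (𝒢 := 𝒢) (𝒢.inv g)
  rw [𝒢.inv_inv] at h
  simp [rng, src, h]

lemma rng_inv (g : G) : 𝒢.rng (𝒢.inv g) = 𝒢.src g := by
  have h : 𝒢.rng (𝒢.inv g) = (𝒢.mul (𝒢.inv g) (𝒢.inv (𝒢.inv g))).getD (𝒢.inv g) := rfl
  rw [h, 𝒢.inv_inv, mul_inv_self]
  rfl

lemma mul_src_self (g : G) : 𝒢.mul g (𝒢.src g) = some g := 𝒢.mul_src (mul_inv_self g)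

lemma rng_mul_self (g : G) : 𝒢.mul (𝒢.rng g) g = some g := 𝒢.rng_mul (mul_self_inv g)

lemma eq_src_of_mul_self {g k : G} (h : 𝒢.mul g k = some g) : k = 𝒢.src g := by
  have h2 := 𝒢.inv_mul_cancel h
  rw [mul_inv_self] at h2
  exact (Option.some_inj.mp h2).symm

lemma eq_rng_of_mul_self {p g : G} (h : 𝒢.mul p g = some g) : p = 𝒢.rng g := by
  have h2 := 𝒢.mul_inv_cancel h
  rw [mul_self_inv] at h2
  exact (Option.some_inj.mp h2).symm

lemma src_eq_of_mul {p k x : G} (h : 𝒢.mul p k = some x) : 𝒢.src x = 𝒢.src k := by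
  have h2 : 𝒢.mul x (𝒢.src k) = some x := by
    rw [𝒢.massoc h (mul_src_self k)]; exact h
  exact (eq_src_of_mul_self h2).symm

lemma rng_eq_of_mul {p k x : G} (h : 𝒢.mul p k = some x) : 𝒢.rng x = 𝒢.rng p := by
  have h2 : 𝒢.mul (𝒢.rng p) x = some x := by
    rw [← 𝒢.massoc (rng_mul_self p) h]; exact h
  exact (eq_rng_of_mul_self h2).symm

lemma k_unique {p k1 k2 x : G} (h1 : 𝒢.mul p k1 = some x) (h2 : 𝒢.mul p k2 = some x) :
    k1 = k2 := by
  have a1 := 𝒢.inv_mul_cancel h1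
  have a2 := 𝒢.inv_mul_cancel h2
  rw [a1] at a2; exact Option.some_inj.mp a2

lemma isSome_src_rng {g h : G} (hh : (𝒢.mul g h).isSome) : 𝒢.src g = 𝒢.rng h := by
  have h2 := (𝒢.defined_iff g h).mp hh
  rw [mul_inv_self, mul_self_inv] at h2
  exact Option.some_inj.mp h2

lemma inv_src (g : G) : 𝒢.inv (𝒢.src g) = 𝒢.src g := by
  have h1 := mul_inv_self (𝒢 := 𝒢) g
  have h2 := 𝒢.mul_inv_cancel h1
  have h3 := 𝒢.inv_mul_cancel h2
  have h4 := 𝒢.mul_inv_cancel h3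
  rw [𝒢.inv_inv, h1] at h4
  exact (Option.some_inj.mp h4).symm

lemma mul_src_src (g : G) : 𝒢.mul (𝒢.src g) (𝒢.src g) = some (𝒢.src g) := by
  rw [𝒢.massoc (mul_inv_self g) (mul_src_self g)]
  exact mul_inv_self g

lemma src_src (g : G) : 𝒢.src (𝒢.src g) = 𝒢.src g := by
  have h : 𝒢.src (𝒢.src g) = (𝒢.mul (𝒢.inv (𝒢.src g)) (𝒢.src g)).getD (𝒢.src g) := rfl
  rw [h, inv_src, mul_src_src]
  rfl

lemma rng_src (g : G) : 𝒢.rng (𝒢.src g) = 𝒢.src g := by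
  have h : 𝒢.rng (𝒢.src g) = (𝒢.mul (𝒢.src g) (𝒢.inv (𝒢.src g))).getD (𝒢.src g) := rfl
  rw [h, inv_src, mul_src_src]
  rfl

lemma rng_rng (g : G) : 𝒢.rng (𝒢.rng g) = 𝒢.rng g := by
  rw [← src_inv g, rng_src]

lemma src_rng (g : G) : 𝒢.src (𝒢.rng g) = 𝒢.rng g := by
  rw [← src_inv g, src_src]

lemma src_mem (g : G) : 𝒢.src g ∈ 𝒢.unitSpace := ⟨g, rfl⟩

lemma rng_mem (g : G) : 𝒢.rng g ∈ 𝒢.unitSpace := ⟨𝒢.inv g, src_inv g⟩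

lemma unit_mul_left {u k x : G} (hu : u ∈ 𝒢.unitSpace) (h : 𝒢.mul u k = some x) :
    x = k ∧ u = 𝒢.rng k := by
  obtain ⟨g0, rfl⟩ := hu
  have hd : 𝒢.src (𝒢.src g0) = 𝒢.rng k := isSome_src_rng (by rw [h]; rfl)
  rw [src_src] at hd
  have h2 := rng_mul_self (𝒢 := 𝒢) k
  rw [← hd] at h2
  rw [h] at h2
  exact ⟨Option.some_inj.mp h2, hd⟩

lemma unit_mul_right {k u x : G} (hu : u ∈ 𝒢.unitSpace) (h : 𝒢.mul k u = some x) :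
    x = k ∧ u = 𝒢.src k := by
  obtain ⟨g0, rfl⟩ := hu
  have hd : 𝒢.src k = 𝒢.rng (𝒢.src g0) := isSome_src_rng (by rw [h]; rfl)
  rw [rng_src] at hd
  have h2 := mul_src_self (𝒢 := 𝒢) k
  rw [hd] at h2
  rw [h] at h2
  exact ⟨Option.some_inj.mp h2, hd.symm⟩

lemma inv_of_mul_eq_rng {g k : G} (h : 𝒢.mul g k = some (𝒢.rng g)) : k = 𝒢.inv g := by
  have h1 := 𝒢.inv_mul_cancel h
  have h2 : 𝒢.mul (𝒢.inv g) (𝒢.rng g) = some (𝒢.inv g) := by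
    have := mul_src_self (𝒢 := 𝒢) (𝒢.inv g); rwa [src_inv] at this
  rw [h2] at h1
  exact (Option.some_inj.mp h1).symm

lemma inv_of_mul_eq_src {g j : G} (h : 𝒢.mul j g = some (𝒢.src g)) : j = 𝒢.inv g := by
  have h1 := 𝒢.mul_inv_cancel h
  have h2 : 𝒢.mul (𝒢.src g) (𝒢.inv g) = some (𝒢.inv g) := by
    have := rng_mul_self (𝒢 := 𝒢) (𝒢.inv g); rwa [rng_inv] at this
  rw [h2] at h1
  exact (Option.some_inj.mp h1).symm


end Gpd
end AuxGpd

section AuxConv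
namespace Gpd

variable {G Y : Type*} [Monoid Y] {𝒢 : Gpd G}

lemma mem_pdom_of_some {c : G → Option Y} {g : G} {y : Y} (h : c g = some y) :
    g ∈ pdom c := by simp [pdom, h]

lemma unitsPre_subset_pdom {c : G → Option Y} : unitsPre c ⊆ pdom c := by
  rintro g ⟨y, hy, -⟩; exact mem_pdom_of_some hy

lemma onePre_subset_pdom {c : G → Option Y} : onePre c ⊆ pdom c := fun g hg =>
  mem_pdom_of_some hg

open Classical in
lemma convProd_apply (c d : G → Option Y) (x : G) :
    𝒢.convProd c d x = if h : ∃ p : Y × Y, ∃ g k : G,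
        c g = some p.1 ∧ d k = some p.2 ∧ 𝒢.mul g k = some x
      then some (h.choose.1 * h.choose.2) else none := rfl

lemma conv_isSome {c d : G → Option Y} {p k x : G} {y z : Y}
    (hc : c p = some y) (hd : d k = some z) (hx : 𝒢.mul p k = some x) :
    (𝒢.convProd c d x).isSome := by
  rw [convProd_apply, dif_pos ⟨(y, z), p, k, hc, hd, hx⟩]
  rfl

lemma conv_cases {c d : G → Option Y} {x : G}
    (hs : (𝒢.convProd c d x).isSome) :
    ∃ p k y z, c p = some y ∧ d k = some z ∧ 𝒢.mul p k = some x ∧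
      𝒢.convProd c d x = some (y * z) := by
  by_cases h : ∃ p : Y × Y, ∃ g k : G, c g = some p.1 ∧ d k = some p.2 ∧ 𝒢.mul g k = some x
  · obtain ⟨g, k, h1, h2, h3⟩ := h.choose_spec
    exact ⟨g, k, h.choose.1, h.choose.2, h1, h2, h3, by rw [convProd_apply, dif_pos h]⟩
  · rw [convProd_apply, dif_neg h] at hs
    exact absurd hs (by simp)

lemma conv_eval {c d : G → Option Y} (Bc : 𝒢.IsBisection (pdom c)) {p k x : G} {y z : Y}
    (hc : c p = some y) (hd : d k = some z) (hx : 𝒢.mul p k = some x) :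
    𝒢.convProd c d x = some (y * z) := by
  obtain ⟨p', k', y', z', hc', hd', hx', hval⟩ := conv_cases (conv_isSome hc hd hx)
  have hpp : p' = p := by
    refine Bc p' (mem_pdom_of_some hc') p (mem_pdom_of_some hc) (Or.inr ?_)
    rw [← rng_eq_of_mul hx', ← rng_eq_of_mul hx]
  subst hpp
  have hkk : k' = k := k_unique hx' hx
  subst hkk
  rw [hc] at hc'; rw [hd] at hd'
  rw [hval, Option.some_inj.mp hc', Option.some_inj.mp hd']

end Gpd

end AuxConv

/-- in a compact-bumpy semigroup, `a ≺ b` iff `dom(a)` is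
compactly contained in `[Y^×]b`. -/
theorem stmt16 {G Y : Type*} [TopologicalSpace G] [Monoid Y] (𝒢 : Gpd G)
    (hT2 : T2Space 𝒢.unitSpace) (hY : OneCancellative Y)
    (S : Set (G → Option Y)) (hS : 𝒢.IsCompactBumpy S)
    (D : Set (G → Option Y)) (hDdef : D = {a ∈ S | pdom a ⊆ 𝒢.unitSpace})
    (a b : G → Option Y) (ha : a ∈ S) (hb : b ∈ S) :
    (∃ s ∈ S, precS 𝒢.convProd D a s b) ↔
      ∃ C : Set G, IsCompact C ∧ pdom a ⊆ C ∧ C ⊆ unitsPre b := by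
  classical
  have Bb := hS.bumpy.domBisection b hb
  have Ba := hS.bumpy.domBisection a ha
  constructor
  · rintro ⟨s, hsS, h1, h2, hD1, hD2⟩
    have Bs := hS.bumpy.domBisection s hsS
    rw [hDdef] at hD1
    obtain ⟨hasS, hasU⟩ := hD1
    have hbsS : 𝒢.convProd b s ∈ S := hS.bumpy.mulClosed b hb s hsS
    have hsbS : 𝒢.convProd s b ∈ S := hS.bumpy.mulClosed s hsS b hb
    -- Step 1: pointwise facts on `pdom a`
    have F1 : ∀ g ∈ pdom a, g ∈ pdom b ∧ 𝒢.rng g ∈ onePre (𝒢.convProd b s) ∧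
        𝒢.src g ∈ onePre (𝒢.convProd s b) := by
      intro g hg
      obtain ⟨α, hag⟩ := Option.isSome_iff_exists.mp hg
      -- use h1
      have hg1 : (𝒢.convProd (𝒢.convProd a s) b g).isSome := by rw [h1]; exact hg
      obtain ⟨p, k, y, z, hp, hk, hpk, hval⟩ := Gpd.conv_cases hg1
      rw [h1, hag] at hval
      have hα1 : α = y * z := Option.some_inj.mp hval
      have hpu : p ∈ 𝒢.unitSpace := hasU (Gpd.mem_pdom_of_some hp)
      obtain ⟨hgk, hprk⟩ := Gpd.unit_mul_left hpu hpk
      rw [← hgk] at hk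
      have hgb : g ∈ pdom b := Gpd.mem_pdom_of_some hk
      have hprg : p = 𝒢.rng g := by rw [hgk]; exact hprk
      have has_rng : 𝒢.convProd a s (𝒢.rng g) = some y := by rw [← hprg]; exact hp
      -- use h2
      have hg2 : (𝒢.convProd (𝒢.convProd b s) a g).isSome := by rw [h2]; exact hg
      obtain ⟨p', k', y', z', hp', hk', hpk', hval2⟩ := Gpd.conv_cases hg2
      rw [h2, hag] at hval2
      have hα2 : α = y' * z' := Option.some_inj.mp hval2
      have hk'g : k' = g := Ba k' (Gpd.mem_pdom_of_some hk') g hg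
        (Or.inl (Gpd.src_eq_of_mul hpk').symm)
      rw [hk'g] at hpk' hk'
      have hp'r : p' = 𝒢.rng g := Gpd.eq_rng_of_mul_self hpk'
      rw [hag] at hk'
      have hz'α : α = z' := Option.some_inj.mp hk'
      have hy'1 : y' = 1 := by
        refine (hY α y').2.mp ?_
        rw [← hz'α] at hα2; exact hα2.symm
      have hbs1 : 𝒢.convProd b s (𝒢.rng g) = some 1 := by
        rw [← hp'r, hp', hy'1]
      -- unfold bs (rng g) = some 1 to get s (inv g)
      obtain ⟨h₀, j₀, y₁, y₂, hbh, hsj, hm0, hval3⟩ :=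
        Gpd.conv_cases (show (𝒢.convProd b s (𝒢.rng g)).isSome by rw [hbs1]; rfl)
      have hh₀ : h₀ = g := by
        refine Bb h₀ (Gpd.mem_pdom_of_some hbh) g hgb (Or.inr ?_)
        have e := Gpd.rng_eq_of_mul hm0
        rw [Gpd.rng_rng] at e; exact e.symm
      rw [hh₀] at hm0 hbh
      have hj₀ : j₀ = 𝒢.inv g := Gpd.inv_of_mul_eq_rng hm0
      rw [hj₀] at hsj
      -- unfold as (rng g) = some y
      obtain ⟨p₁, k₁, w₁, w₂, hap₁, hsk₁, hm₁, hval4⟩ :=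
        Gpd.conv_cases (show (𝒢.convProd a s (𝒢.rng g)).isSome by rw [has_rng]; rfl)
      rw [has_rng] at hval4
      have hyw : y = w₁ * w₂ := Option.some_inj.mp hval4
      have hp₁g : p₁ = g := by
        refine Ba p₁ (Gpd.mem_pdom_of_some hap₁) g hg (Or.inr ?_)
        have e := Gpd.rng_eq_of_mul hm₁
        rw [Gpd.rng_rng] at e; exact e.symm
      rw [hp₁g] at hap₁ hm₁
      have hk₁ : k₁ = 𝒢.inv g := Gpd.inv_of_mul_eq_rng hm₁
      rw [hk₁] at hsk₁
      rw [hag] at hap₁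
      have hw₁ : α = w₁ := Option.some_inj.mp hap₁
      -- σβ = 1
      have hσβ : w₂ * z = 1 := by
        refine (hY α (w₂ * z)).1.mp ?_
        conv_lhs => rw [hw₁]
        rw [← mul_assoc, ← hyw, ← hα1]
      have hw₂ : w₂ = y₂ := by
        rw [hsj] at hsk₁; exact Option.some_inj.mp hsk₁.symm
      have hsb1 : 𝒢.convProd s b (𝒢.src g) = some 1 := by
        have e := Gpd.conv_eval Bs hsj hk (Gpd.mul_inv_self g)
        rw [← hw₂, hσβ] at e; exact e
      exact ⟨hgb, hbs1, hsb1⟩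
    have hKcomp : IsCompact (onePre (𝒢.convProd b s)) := hS.bumpy.oneProper _ hbsS
    have hLcomp : IsCompact (onePre (𝒢.convProd s b)) := hS.bumpy.oneProper _ hsbS
    refine ⟨{x | x ∈ pdom b ∧ (∃ u ∈ onePre (𝒢.convProd b s), 𝒢.rng u = 𝒢.rng x) ∧
      (∃ v ∈ onePre (𝒢.convProd s b), 𝒢.src v = 𝒢.src x)}, ?_, ?_, ?_⟩
    · -- compactness
      rw [isCompact_iff_ultrafilter_le_nhds]
      intro F hF
      set C : Set G := {x | x ∈ pdom b ∧ (∃ u ∈ onePre (𝒢.convProd b s), 𝒢.rng u = 𝒢.rng x) ∧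
        (∃ v ∈ onePre (𝒢.convProd s b), 𝒢.src v = 𝒢.src x)} with hCdef
      have hCF : C ∈ F := Filter.le_principal_iff.mp hF
      set fu : G → G := fun y =>
        if h : ∃ u, u ∈ onePre (𝒢.convProd b s) ∧ 𝒢.rng u = 𝒢.rng y then h.choose else y
        with hfu_def
      have hfu : ∀ y ∈ C, fu y ∈ onePre (𝒢.convProd b s) ∧ 𝒢.rng (fu y) = 𝒢.rng y := by
        intro y hy
        obtain ⟨-, ⟨u, hu1, hu2⟩, -⟩ := hy
        have hex : ∃ u, u ∈ onePre (𝒢.convProd b s) ∧ 𝒢.rng u = 𝒢.rng y := ⟨u, hu1, hu2⟩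
        simp only [hfu_def, dif_pos hex]
        exact hex.choose_spec
      set fv : G → G := fun y =>
        if h : ∃ v, v ∈ onePre (𝒢.convProd s b) ∧ 𝒢.src v = 𝒢.src y then h.choose else y
        with hfv_def
      have hfv : ∀ y ∈ C, fv y ∈ onePre (𝒢.convProd s b) ∧ 𝒢.src (fv y) = 𝒢.src y := by
        intro y hy
        obtain ⟨-, -, ⟨v, hv1, hv2⟩⟩ := hy
        have hex : ∃ v, v ∈ onePre (𝒢.convProd s b) ∧ 𝒢.src v = 𝒢.src y := ⟨v, hv1, hv2⟩
        simp only [hfv_def, dif_pos hex]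
        exact hex.choose_spec
      have hFuK : (↑(F.map fu) : Filter G) ≤ Filter.principal (onePre (𝒢.convProd b s)) := by
        rw [Filter.le_principal_iff, Ultrafilter.coe_map, Filter.mem_map]
        exact Filter.mem_of_superset hCF (fun y hy => (hfu y hy).1)
      have hFvL : (↑(F.map fv) : Filter G) ≤ Filter.principal (onePre (𝒢.convProd s b)) := by
        rw [Filter.le_principal_iff, Ultrafilter.coe_map, Filter.mem_map]
        exact Filter.mem_of_superset hCF (fun y hy => (hfv y hy).1)
      obtain ⟨ustar, hustarK, hustarN⟩ := hKcomp.ultrafilter_le_nhds (F.map fu) hFuK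
      obtain ⟨vstar, hvstarL, hvstarN⟩ := hLcomp.ultrafilter_le_nhds (F.map fv) hFvL
      obtain ⟨x₁, j₁, yb, ys, hbx₁, hsj₁, hmulu, -⟩ :=
        Gpd.conv_cases (show (𝒢.convProd b s ustar).isSome by
          rw [show 𝒢.convProd b s ustar = some 1 from hustarK]; rfl)
      obtain ⟨j₂, x₂, zs, zb, hsj₂, hbx₂, hmulv, -⟩ :=
        Gpd.conv_cases (show (𝒢.convProd s b vstar).isSome by
          rw [show 𝒢.convProd s b vstar = some 1 from hvstarL]; rfl)
      have hx₁b : x₁ ∈ pdom b := Gpd.mem_pdom_of_some hbx₁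
      have hx₂b : x₂ ∈ pdom b := Gpd.mem_pdom_of_some hbx₂
      -- F converges to x₁
      have hFx1 : (↑F : Filter G) ≤ nhds x₁ := by
        rw [le_nhds_iff]
        intro O hxO hOopen
        obtain ⟨c, hcS, hcsub, hcint⟩ := hS.bumpy.urysohn (O ∩ pdom b)
          (hOopen.inter (hS.bumpy.domOpen b hb)) x₁ ⟨hxO, hx₁b⟩
        obtain ⟨yc, hyc⟩ := Option.isSome_iff_exists.mp
          (Gpd.unitsPre_subset_pdom (interior_subset hcint))
        have hWopen := hS.bumpy.domOpen _ (hS.bumpy.mulClosed c hcS s hsS)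
        have huW : ustar ∈ pdom (𝒢.convProd c s) := Gpd.conv_isSome hyc hsj₁ hmulu
        have hWFu : pdom (𝒢.convProd c s) ∈ (↑(F.map fu) : Filter G) :=
          hustarN (hWopen.mem_nhds huW)
        rw [Ultrafilter.coe_map, Filter.mem_map] at hWFu
        refine Filter.mem_of_superset (Filter.inter_mem hCF hWFu) ?_
        rintro y ⟨hyC, hyW⟩
        obtain ⟨p, k, _, _, hcp, hsk, hmk, -⟩ :=
          Gpd.conv_cases (hyW : (𝒢.convProd c s (fu y)).isSome)
        have hrng : 𝒢.rng p = 𝒢.rng y := by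
          rw [← Gpd.rng_eq_of_mul hmk]; exact (hfu y hyC).2
        have hpy : p = y := Bb p (hcsub (Gpd.mem_pdom_of_some hcp)).2 y hyC.1 (Or.inr hrng)
        have : y ∈ pdom c := by rw [← hpy]; exact Gpd.mem_pdom_of_some hcp
        exact (hcsub this).1
      -- F converges to x₂
      have hFx2 : (↑F : Filter G) ≤ nhds x₂ := by
        rw [le_nhds_iff]
        intro O hxO hOopen
        obtain ⟨c, hcS, hcsub, hcint⟩ := hS.bumpy.urysohn (O ∩ pdom b)
          (hOopen.inter (hS.bumpy.domOpen b hb)) x₂ ⟨hxO, hx₂b⟩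
        obtain ⟨yc, hyc⟩ := Option.isSome_iff_exists.mp
          (Gpd.unitsPre_subset_pdom (interior_subset hcint))
        have hVopen := hS.bumpy.domOpen _ (hS.bumpy.mulClosed s hsS c hcS)
        have hvV : vstar ∈ pdom (𝒢.convProd s c) := Gpd.conv_isSome hsj₂ hyc hmulv
        have hVFv : pdom (𝒢.convProd s c) ∈ (↑(F.map fv) : Filter G) :=
          hvstarN (hVopen.mem_nhds hvV)
        rw [Ultrafilter.coe_map, Filter.mem_map] at hVFv
        refine Filter.mem_of_superset (Filter.inter_mem hCF hVFv) ?_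
        rintro y ⟨hyC, hyV⟩
        obtain ⟨p, k, _, _, hsp, hck, hmk, -⟩ :=
          Gpd.conv_cases (hyV : (𝒢.convProd s c (fv y)).isSome)
        have hsrc : 𝒢.src k = 𝒢.src y := by
          rw [← Gpd.src_eq_of_mul hmk]; exact (hfv y hyC).2
        have hky : k = y := Bb k (hcsub (Gpd.mem_pdom_of_some hck)).2 y hyC.1 (Or.inl hsrc)
        have : y ∈ pdom c := by rw [← hky]; exact Gpd.mem_pdom_of_some hck
        exact (hcsub this).1
      -- the two limit candidates coincide
      have hx12 : x₁ = x₂ := by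
        by_contra hne
        have hsrcne : 𝒢.src x₁ ≠ 𝒢.src x₂ := fun h => hne (Bb x₁ hx₁b x₂ hx₂b (Or.inl h))
        haveI := hT2
        obtain ⟨U₁, U₂, hU₁o, hU₂o, hw₁, hw₂, hdisj⟩ :=
          t2_separation (show (⟨𝒢.src x₁, Gpd.src_mem x₁⟩ : 𝒢.unitSpace) ≠
            ⟨𝒢.src x₂, Gpd.src_mem x₂⟩ from fun h => hsrcne (congrArg Subtype.val h))
        obtain ⟨O₁, hO₁o, hO₁e⟩ := isOpen_induced_iff.mp hU₁o
        obtain ⟨O₂, hO₂o, hO₂e⟩ := isOpen_induced_iff.mp hU₂o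
        have hs1O : 𝒢.src x₁ ∈ O₁ := by
          have h' : (⟨𝒢.src x₁, Gpd.src_mem x₁⟩ : 𝒢.unitSpace) ∈ U₁ := hw₁
          rw [← hO₁e] at h'; exact h'
        have hs2O : 𝒢.src x₂ ∈ O₂ := by
          have h' : (⟨𝒢.src x₂, Gpd.src_mem x₂⟩ : 𝒢.unitSpace) ∈ U₂ := hw₂
          rw [← hO₂e] at h'; exact h'
        obtain ⟨c₁, hc₁S, hc₁sub, hc₁int⟩ := hS.bumpy.urysohn (pdom b)
          (hS.bumpy.domOpen b hb) x₁ hx₁b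
        obtain ⟨d₁, hd₁S, hd₁sub, hd₁int⟩ := hS.bumpy.urysohn O₁ hO₁o (𝒢.src x₁) hs1O
        obtain ⟨c₂, hc₂S, hc₂sub, hc₂int⟩ := hS.bumpy.urysohn (pdom b)
          (hS.bumpy.domOpen b hb) x₂ hx₂b
        obtain ⟨d₂, hd₂S, hd₂sub, hd₂int⟩ := hS.bumpy.urysohn O₂ hO₂o (𝒢.src x₂) hs2O
        obtain ⟨yc₁, hyc₁⟩ := Option.isSome_iff_exists.mp
          (Gpd.unitsPre_subset_pdom (interior_subset hc₁int))
        obtain ⟨yd₁, hyd₁⟩ := Option.isSome_iff_exists.mp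
          (Gpd.unitsPre_subset_pdom (interior_subset hd₁int))
        obtain ⟨yc₂, hyc₂⟩ := Option.isSome_iff_exists.mp
          (Gpd.unitsPre_subset_pdom (interior_subset hc₂int))
        obtain ⟨yd₂, hyd₂⟩ := Option.isSome_iff_exists.mp
          (Gpd.unitsPre_subset_pdom (interior_subset hd₂int))
        have hmem1 : x₁ ∈ pdom (𝒢.convProd c₁ d₁) :=
          Gpd.conv_isSome hyc₁ hyd₁ (Gpd.mul_src_self x₁)
        have hmem2 : x₂ ∈ pdom (𝒢.convProd c₂ d₂) :=
          Gpd.conv_isSome hyc₂ hyd₂ (Gpd.mul_src_self x₂)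
        have h1F : pdom (𝒢.convProd c₁ d₁) ∈ F := hFx1
          ((hS.bumpy.domOpen _ (hS.bumpy.mulClosed c₁ hc₁S d₁ hd₁S)).mem_nhds hmem1)
        have h2F : pdom (𝒢.convProd c₂ d₂) ∈ F := hFx2
          ((hS.bumpy.domOpen _ (hS.bumpy.mulClosed c₂ hc₂S d₂ hd₂S)).mem_nhds hmem2)
        obtain ⟨y, hyC, hy1, hy2⟩ :=
          Filter.nonempty_of_mem (Filter.inter_mem hCF (Filter.inter_mem h1F h2F))
        -- from hy1 : y ∈ pdom (c₁ * d₁)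
        have hsy1 : 𝒢.src y ∈ O₁ := by
          obtain ⟨p, k, _, _, hc1p, hd1k, hmk, -⟩ :=
            Gpd.conv_cases (hy1 : (𝒢.convProd c₁ d₁ y).isSome)
          have hpy : p = y := Bb p (hc₁sub (Gpd.mem_pdom_of_some hc1p)) y hyC.1
            (Or.inr (Gpd.rng_eq_of_mul hmk).symm)
          rw [hpy] at hmk
          have hkeq : k = 𝒢.src y := Gpd.eq_src_of_mul_self hmk
          rw [hkeq] at hd1k
          exact hd₁sub (Gpd.mem_pdom_of_some hd1k)
        have hsy2 : 𝒢.src y ∈ O₂ := by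
          obtain ⟨p, k, _, _, hc2p, hd2k, hmk, -⟩ :=
            Gpd.conv_cases (hy2 : (𝒢.convProd c₂ d₂ y).isSome)
          have hpy : p = y := Bb p (hc₂sub (Gpd.mem_pdom_of_some hc2p)) y hyC.1
            (Or.inr (Gpd.rng_eq_of_mul hmk).symm)
          rw [hpy] at hmk
          have hkeq : k = 𝒢.src y := Gpd.eq_src_of_mul_self hmk
          rw [hkeq] at hd2k
          exact hd₂sub (Gpd.mem_pdom_of_some hd2k)
        have m1 : (⟨𝒢.src y, Gpd.src_mem y⟩ : 𝒢.unitSpace) ∈ U₁ := by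
          rw [← hO₁e]; exact hsy1
        have m2 : (⟨𝒢.src y, Gpd.src_mem y⟩ : 𝒢.unitSpace) ∈ U₂ := by
          rw [← hO₂e]; exact hsy2
        exact Set.disjoint_left.mp hdisj m1 m2
      refine ⟨x₁, ⟨hx₁b, ⟨ustar, hustarK, Gpd.rng_eq_of_mul hmulu⟩,
        ⟨vstar, hvstarL, by rw [hx12]; exact Gpd.src_eq_of_mul hmulv⟩⟩, hFx1⟩
    · -- pdom a ⊆ C
      intro g hg
      obtain ⟨hgb, hK, hL⟩ := F1 g hg
      exact ⟨hgb, ⟨𝒢.rng g, hK, Gpd.rng_rng g⟩, ⟨𝒢.src g, hL, Gpd.src_src g⟩⟩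
    · -- C ⊆ unitsPre b
      rintro x ⟨hxb, ⟨u, huK, hru⟩, ⟨v, hvL, hsv⟩⟩
      obtain ⟨h₀, j₀, y₁, y₂, hbh, hsj, hm0, hval⟩ :=
        Gpd.conv_cases (show (𝒢.convProd b s u).isSome by
          rw [show 𝒢.convProd b s u = some 1 from huK]; rfl)
      rw [show 𝒢.convProd b s u = some 1 from huK] at hval
      have h12 : (1 : Y) = y₁ * y₂ := Option.some_inj.mp hval
      have hh₀ : h₀ = x := by
        refine Bb h₀ (Gpd.mem_pdom_of_some hbh) x hxb (Or.inr ?_)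
        rw [← Gpd.rng_eq_of_mul hm0, hru]
      rw [hh₀] at hbh
      obtain ⟨j₁, k₁, z₁, z₂, hsj1, hbk1, hm1, hval1⟩ :=
        Gpd.conv_cases (show (𝒢.convProd s b v).isSome by
          rw [show 𝒢.convProd s b v = some 1 from hvL]; rfl)
      rw [show 𝒢.convProd s b v = some 1 from hvL] at hval1
      have h34 : (1 : Y) = z₁ * z₂ := Option.some_inj.mp hval1
      have hk₁ : k₁ = x := by
        refine Bb k₁ (Gpd.mem_pdom_of_some hbk1) x hxb (Or.inl ?_)
        rw [← Gpd.src_eq_of_mul hm1, hsv]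
      rw [hk₁] at hbk1
      rw [hbh] at hbk1
      have hz₂ : y₁ = z₂ := Option.some_inj.mp hbk1
      have hzy : z₁ * y₁ = 1 := by rw [hz₂]; exact h34.symm
      have hy₂z₁ : y₂ = z₁ := by
        calc y₂ = 1 * y₂ := (one_mul y₂).symm
        _ = (z₁ * y₁) * y₂ := by rw [hzy]
        _ = z₁ * (y₁ * y₂) := mul_assoc _ _ _
        _ = z₁ * 1 := by rw [← h12]
        _ = z₁ := mul_one z₁
      exact ⟨y₁, hbh, ⟨⟨y₁, y₂, h12.symm, by rw [hy₂z₁]; exact hzy⟩, rfl⟩⟩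
  · rintro ⟨C, hCcomp, hCa, hCb⟩
    have hCb' : C ⊆ pdom b := fun x hx => Gpd.unitsPre_subset_pdom (hCb hx)
    obtain ⟨t, htS, hinv⟩ := hS.compactInvolutive b hb C hCb hCcomp
    have Bt := hS.bumpy.domBisection t htS
    have hab : pdom a ⊆ pdom b := fun x hx => hCb' (hCa hx)
    have key : ∀ g ∈ pdom a, ∃ β τ, b g = some β ∧ t (𝒢.inv g) = some τ ∧
        β * τ = 1 ∧ τ * β = 1 := fun g hg => hinv g (hCa hg)
    -- (i) the domain of a*t consists of units
    have hatD : ∀ x ∈ pdom (𝒢.convProd a t), x ∈ 𝒢.unitSpace := by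
      intro x hx
      obtain ⟨g, h, y, z, hag, hth, hm, -⟩ := Gpd.conv_cases hx
      obtain ⟨β, τ, hbg, htg, -, -⟩ := key g (Gpd.mem_pdom_of_some hag)
      have hh : h = 𝒢.inv g := by
        refine Bt h (Gpd.mem_pdom_of_some hth) (𝒢.inv g) (Gpd.mem_pdom_of_some htg)
          (Or.inr ?_)
        rw [Gpd.rng_inv]
        exact (Gpd.isSome_src_rng (by rw [hm]; rfl)).symm
      subst hh
      rw [Gpd.mul_self_inv] at hm
      have hxr : x = 𝒢.rng g := (Option.some_inj.mp hm).symm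
      rw [hxr]; exact Gpd.rng_mem g
    -- (ii) the domain of t*a consists of units
    have htaD : ∀ x ∈ pdom (𝒢.convProd t a), x ∈ 𝒢.unitSpace := by
      intro x hx
      obtain ⟨h, g, y, z, hth, hag, hm, -⟩ := Gpd.conv_cases hx
      obtain ⟨β, τ, hbg, htg, -, -⟩ := key g (Gpd.mem_pdom_of_some hag)
      have hh : h = 𝒢.inv g := by
        refine Bt h (Gpd.mem_pdom_of_some hth) (𝒢.inv g) (Gpd.mem_pdom_of_some htg)
          (Or.inl ?_)
        rw [Gpd.src_inv]
        exact Gpd.isSome_src_rng (by rw [hm]; rfl)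
      subst hh
      rw [Gpd.mul_inv_self] at hm
      have hxr : x = 𝒢.src g := (Option.some_inj.mp hm).symm
      rw [hxr]; exact Gpd.src_mem g
    -- (iii) (a*t)*b = a
    have h3 : 𝒢.convProd (𝒢.convProd a t) b = a := by
      funext x
      by_cases hx : x ∈ pdom a
      · obtain ⟨α, hax⟩ := Option.isSome_iff_exists.mp hx
        obtain ⟨β, τ, hbx, htx, hβτ, hτβ⟩ := key x hx
        have hat : 𝒢.convProd a t (𝒢.rng x) = some (α * τ) :=
          Gpd.conv_eval Ba hax htx (Gpd.mul_self_inv x)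
        have hres : 𝒢.convProd (𝒢.convProd a t) b x = some ((α * τ) * β) :=
          Gpd.conv_eval (hS.bumpy.domBisection _ (hS.bumpy.mulClosed a ha t htS)) hat hbx
            (Gpd.rng_mul_self x)
        rw [hres, hax, mul_assoc, hτβ, mul_one]
      · have hnone : 𝒢.convProd (𝒢.convProd a t) b x = none := by
          by_contra hcon
          obtain ⟨p, k, y, z, hp, hk, hm, -⟩ :=
            Gpd.conv_cases (Option.ne_none_iff_isSome.mp hcon)
          have hpu : p ∈ 𝒢.unitSpace := hatD p (Gpd.mem_pdom_of_some hp)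
          obtain ⟨hxk, hpr⟩ := Gpd.unit_mul_left hpu hm
          have hkb : k ∈ pdom b := Gpd.mem_pdom_of_some hk
          obtain ⟨g', h', w1, w2, hag', hth', hm', -⟩ :=
            Gpd.conv_cases (show (𝒢.convProd a t p).isSome by rw [hp]; rfl)
          obtain ⟨β', τ', hbg', htg', -, -⟩ := key g' (Gpd.mem_pdom_of_some hag')
          have hh' : h' = 𝒢.inv g' := by
            refine Bt h' (Gpd.mem_pdom_of_some hth') (𝒢.inv g')
              (Gpd.mem_pdom_of_some htg') (Or.inr ?_)
            rw [Gpd.rng_inv]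
            exact (Gpd.isSome_src_rng (by rw [hm']; rfl)).symm
          subst hh'
          rw [Gpd.mul_self_inv] at hm'
          have hprg : 𝒢.rng g' = p := Option.some_inj.mp hm'
          have hg'x : g' = k := by
            refine Bb g' (hab (Gpd.mem_pdom_of_some hag')) k hkb (Or.inr ?_)
            rw [hprg, hpr]
          exact hx (by rw [hxk, ← hg'x]; exact Gpd.mem_pdom_of_some hag')
        rw [hnone, Option.not_isSome_iff_eq_none.mp hx]
    -- (iv) (b*t)*a = a
    have h4 : 𝒢.convProd (𝒢.convProd b t) a = a := by
      funext x
      by_cases hx : x ∈ pdom a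
      · obtain ⟨α, hax⟩ := Option.isSome_iff_exists.mp hx
        obtain ⟨β, τ, hbx, htx, hβτ, hτβ⟩ := key x hx
        have hbt : 𝒢.convProd b t (𝒢.rng x) = some (β * τ) :=
          Gpd.conv_eval Bb hbx htx (Gpd.mul_self_inv x)
        have hres : 𝒢.convProd (𝒢.convProd b t) a x = some ((β * τ) * α) :=
          Gpd.conv_eval (hS.bumpy.domBisection _ (hS.bumpy.mulClosed b hb t htS)) hbt hax
            (Gpd.rng_mul_self x)
        rw [hres, hax, hβτ, one_mul]
      · have hnone : 𝒢.convProd (𝒢.convProd b t) a x = none := by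
          by_contra hcon
          obtain ⟨p, k, y, z, hbtp, hak, hmpk, -⟩ :=
            Gpd.conv_cases (Option.ne_none_iff_isSome.mp hcon)
          have hsx := Gpd.src_eq_of_mul hmpk
          have hka : k ∈ pdom a := Gpd.mem_pdom_of_some hak
          obtain ⟨βk, τk, hbk, htk, -, -⟩ := key k hka
          obtain ⟨g₁, h₁, w1, w2, hbg₁, hth₁, hm₁, -⟩ :=
            Gpd.conv_cases (show (𝒢.convProd b t p).isSome by rw [hbtp]; rfl)
          have hh₁ : h₁ = 𝒢.inv k := by
            refine Bt h₁ (Gpd.mem_pdom_of_some hth₁) (𝒢.inv k)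
              (Gpd.mem_pdom_of_some htk) (Or.inl ?_)
            rw [Gpd.src_inv]
            have e1 : 𝒢.src p = 𝒢.src h₁ := Gpd.src_eq_of_mul hm₁
            have e2 : 𝒢.src p = 𝒢.rng k := Gpd.isSome_src_rng (by rw [hmpk]; rfl)
            rw [← e1, e2]
          subst hh₁
          have e3 : 𝒢.mul p k = 𝒢.mul g₁ (𝒢.src k) := 𝒢.massoc hm₁ (Gpd.mul_inv_self k)
          have e4 : 𝒢.src g₁ = 𝒢.src k := by
            have e := Gpd.isSome_src_rng (show (𝒢.mul g₁ (𝒢.inv k)).isSome by rw [hm₁]; rfl)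
            rwa [Gpd.rng_inv] at e
          have e5 : 𝒢.mul g₁ (𝒢.src k) = some g₁ := by
            rw [← e4]; exact Gpd.mul_src_self g₁
          rw [e3, e5] at hmpk
          have hg₁x : g₁ = x := Option.some_inj.mp hmpk
          have hxk : x = k := by
            refine Bb x (by rw [← hg₁x]; exact Gpd.mem_pdom_of_some hbg₁) k (hab hka)
              (Or.inl hsx)
          exact hx (by rw [hxk]; exact hka)
        rw [hnone, Option.not_isSome_iff_eq_none.mp hx]
    refine ⟨t, htS, h3, h4, ?_, ?_⟩
    · rw [hDdef]
      exact ⟨hS.bumpy.mulClosed a ha t htS, fun x hx => hatD x hx⟩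
    · rw [hDdef]
      exact ⟨hS.bumpy.mulClosed t htS a ha, fun x hx => htaD x hx⟩
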